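/- For every open dense set U ⊆ ω^ω × ω^ω and all nonempty open sets V₁, V₂ ⊆ ω^ω there exist finite sequences σ₁, σ₂ of natural numbers with [σ₁] ⊆ V₁, [σ₂] ⊆ V₂, |σ₁| = |σ₂|, [σ₁] × [σ₂] ⊆ U, and [σ₂] × [σ₁] ⊆ U. -/

import Mathlib

/-!
Density and openness of `U` let one shrink any pair of cylinders of equal length to a pair of
cylinders of equal length whose product lies in `U`. Doing this once for cylinders inside `V₁` and
`V₂`, and then once more for the resulting pair in swapped order, gives cylinders whose products
in both orders lie in `U`.
-/

open Set

/-- The basic clopen set of all elements of Baire space extending the finite sequence `σ`. -/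
def cyl (σ : List ℕ) : Set (ℕ → ℕ) :=
  {x | ∀ i : Fin σ.length, x i = σ.get i}

open Filter Topology

namespace PiNat

variable {E F : ℕ → Type*}

theorem cylinder_subset_of_mem {x y : ∀ n, E n} {m n : ℕ} (hy : y ∈ cylinder x n) (h : n ≤ m) :
    cylinder y m ⊆ cylinder x n :=
  mem_cylinder_iff_eq.1 hy ▸ cylinder_anti y h

variable [∀ n, TopologicalSpace (E n)] [∀ n, DiscreteTopology (E n)]
  [∀ n, TopologicalSpace (F n)] [∀ n, DiscreteTopology (F n)]

theorem eventually_cylinder_subset {x : ∀ n, E n} {W : Set (∀ n, E n)} (hW : W ∈ 𝓝 x) :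
    ∀ᶠ n in atTop, cylinder x n ⊆ W := by
  obtain ⟨_, ⟨y, n, rfl⟩, hx, hW⟩ := (isTopologicalBasis_cylinders E).mem_nhds_iff.1 hW
  exact eventually_atTop.2 ⟨n, fun m hm => cylinder_subset_of_mem hx hm |>.trans hW⟩

theorem eventually_cylinder_prod_subset {x : ∀ n, E n} {y : ∀ n, F n}
    {U : Set ((∀ n, E n) × (∀ n, F n))} (hU : U ∈ 𝓝 (x, y)) :
    ∀ᶠ n in atTop, cylinder x n ×ˢ cylinder y n ⊆ U := by
  obtain ⟨u, hu, v, hv, huv⟩ := mem_nhds_prod_iff.1 hU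
  filter_upwards [eventually_cylinder_subset hu, eventually_cylinder_subset hv] with n hxu hyv
  exact (prod_mono hxu hyv).trans huv

theorem exists_cylinder_prod_subset_of_dense {U : Set ((∀ n, E n) × (∀ n, F n))}
    (hUo : IsOpen U) (hUd : Dense U) (x : ∀ n, E n) (y : ∀ n, F n) (n : ℕ) :
    ∃ (x' : ∀ n, E n) (y' : ∀ n, F n) (m : ℕ), cylinder x' m ⊆ cylinder x n ∧
      cylinder y' m ⊆ cylinder y n ∧ cylinder x' m ×ˢ cylinder y' m ⊆ U := by
  obtain ⟨⟨x', y'⟩, ⟨hx', hy'⟩, hU⟩ := hUd.inter_open_nonempty _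
    ((isOpen_cylinder E x n).prod (isOpen_cylinder F y n))
    ⟨(x, y), self_mem_cylinder x n, self_mem_cylinder y n⟩
  obtain ⟨m, hnm, hm⟩ :=
    ((eventually_ge_atTop n).and (eventually_cylinder_prod_subset (hUo.mem_nhds hU))).exists
  exact ⟨x', y', m, cylinder_subset_of_mem hx' hnm, cylinder_subset_of_mem hy' hnm, hm⟩

end PiNat

open PiNat

theorem cyl_ofFn (x : ℕ → ℕ) (n : ℕ) : cyl (List.ofFn fun i : Fin n => x i) = cylinder x n := by
  ext y
  simp [cyl, mem_cylinder_iff, Fin.forall_iff]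

theorem pair_of_cylinders_in_open_dense
    (U : Set ((ℕ → ℕ) × (ℕ → ℕ))) (hUo : IsOpen U) (hUd : Dense U)
    (V₁ V₂ : Set (ℕ → ℕ)) (hV₁ : IsOpen V₁) (hV₁n : V₁.Nonempty)
    (hV₂ : IsOpen V₂) (hV₂n : V₂.Nonempty) :
    ∃ σ₁ σ₂ : List ℕ, cyl σ₁ ⊆ V₁ ∧ cyl σ₂ ⊆ V₂ ∧ σ₁.length = σ₂.length ∧
      cyl σ₁ ×ˢ cyl σ₂ ⊆ U ∧ cyl σ₂ ×ˢ cyl σ₁ ⊆ U := by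
  obtain ⟨x₁, hx₁⟩ := hV₁n
  obtain ⟨x₂, hx₂⟩ := hV₂n
  obtain ⟨n, hn₁, hn₂⟩ := ((eventually_cylinder_subset (hV₁.mem_nhds hx₁)).and
    (eventually_cylinder_subset (hV₂.mem_nhds hx₂))).exists
  obtain ⟨y₁, y₂, m, hy₁, hy₂, hyU⟩ := exists_cylinder_prod_subset_of_dense hUo hUd x₁ x₂ n
  obtain ⟨z₂, z₁, k, hz₂, hz₁, hzU⟩ := exists_cylinder_prod_subset_of_dense hUo hUd y₂ y₁ m
  refine ⟨List.ofFn fun i : Fin k => z₁ i, List.ofFn fun i : Fin k => z₂ i, ?_, ?_, by simp, ?_, ?_⟩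
    <;> simp only [cyl_ofFn]
  · exact hz₁.trans (hy₁.trans hn₁)
  · exact hz₂.trans (hy₂.trans hn₂)
  · exact (prod_mono hz₁ hz₂).trans hyU
  · exact hzU
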